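/- Let N ≥ 1 and let p_{ij}, d_{ij} : ℝ^N → ℝ (1 ≤ i,j ≤ N) be nonnegative, twice continuously differentiable functions with p_{ij}(z) = d_{ji}(z) and p_{ii}(z) = d_{ii}(z) = 0 for all z. Set P_i = Σ_j p_{ij}, D_i = Σ_j d_{ij}. Let y : [t_n, t_n + T] → ℝ^N solve y_i' = P_i(y) − D_i(y) with y(t_n) = yⁿ, all yⁿ_i > 0. Let a21, b1, b2 ≥ 0 with b1 + b2 = 1 and a21·b2 = 1/2. Suppose π, σ : (0,T) → ℝ^N take positive values and satisfy π_i(Δt) = yⁿ_i + O(Δt) and σ_i(Δt) = yⁿ_i + Δt·(P_i(yⁿ) − D_i(yⁿ)) + O(Δt²) as Δt → 0⁺. Suppose Y2, Y : (0,T) → ℝ^N satisfy, for every Δt ∈ (0,T) and every i: Y2_i = yⁿ_i + a21·Δt Σ_j ( p_{ij}(yⁿ)·Y2_j/π_j − d_{ij}(yⁿ)·Y2_i/π_i ) and Y_i = yⁿ_i + Δt Σ_j ( (b1·p_{ij}(yⁿ) + b2·p_{ij}(Y2))·Y_j/σ_j − (b1·d_{ij}(yⁿ) + b2·d_{ij}(Y2))·Y_i/σ_i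 ). Then Y_i(Δt) = y_i(t_n + Δt) + O(Δt³) as Δt → 0⁺ for every i. (Sufficiency of the order conditions for second-order accuracy of two-stage MPRK schemes with conservative stage, δ = 1.) -/

import Mathlib

/-- `f(Δt) = O(Δt^m)` as `Δt → 0⁺`. -/
def BigOAtZero (f : ℝ → ℝ) (m : ℕ) : Prop :=
  ∃ C > 0, ∃ δ > 0, ∀ t : ℝ, 0 < t → t < δ → |f t| ≤ C * t ^ m

/-!
Both stages solve linear systems `u = y₀ + τ P(u)`, where `P` is the Patankar-weighted
production minus destruction with weights `w`. Conservativity (`p i j = d j i`) preserves the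
total mass and a minimum principle for `u / w` preserves positivity, so the stage values stay
bounded and each Patankar factor `u j / w j` tends to `1`; hence a Patankar step differs from the
explicit Euler step `y₀ + τ f` by `τ · O(u - w)`. With `π = yⁿ + O(Δt)` this gives
`Y2 = yⁿ + a₂₁ Δt f(yⁿ) + O(Δt²)`; since `σ` is a second-order predictor of `Y`, `Y - σ = O(Δt²)`
and `Y = yⁿ + Δt (b₁ f(yⁿ) + b₂ f(Y2)) + O(Δt³)`. Expanding `f(Y2)` to second order and using
`b₁ + b₂ = 1`, `a₂₁ b₂ = 1/2` reproduces the Taylor expansion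
`yⁿ + Δt f + Δt²/2 f'f + O(Δt³)` of the exact solution.
-/

open Filter Topology Asymptotics Set

theorem bigOAtZero_iff_isBigO {f : ℝ → ℝ} {m : ℕ} :
    BigOAtZero f m ↔ f =O[𝓝[>] 0] fun t => t ^ m := by
  constructor
  · rintro ⟨C, -, δ, hδ, hf⟩
    refine .of_bound C ?_
    filter_upwards [Ioo_mem_nhdsGT hδ] with t ht
    rw [Real.norm_eq_abs, Real.norm_of_nonneg (pow_nonneg ht.1.le m)]
    exact hf t ht.1 ht.2
  · intro h
    obtain ⟨C, hC⟩ := h.bound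
    obtain ⟨δ, hδ, hsub⟩ := mem_nhdsGT_iff_exists_Ioo_subset.1 hC
    refine ⟨max C 1, by positivity, δ, hδ, fun t ht htδ => ?_⟩
    have hb := hsub ⟨ht, htδ⟩
    simp only [mem_ofPred_eq, Real.norm_eq_abs, abs_pow, abs_of_pos ht] at hb
    exact hb.trans (by gcongr; exact le_max_left _ _)

section NhdsGT

variable {E : Type*} [NormedAddCommGroup E]

theorem tendsto_of_isBigO_sub {u : ℝ → E} {y₀ : E}
    (h : (fun t => u t - y₀) =O[𝓝[>] 0] fun t => t) : Tendsto u (𝓝[>] 0) (𝓝 y₀) :=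
  tendsto_sub_nhds_zero_iff.1 (h.trans_tendsto (tendsto_nhdsWithin_of_tendsto_nhds tendsto_id))

theorem isBigO_sub_of_isBigO_sub_smul [NormedSpace ℝ E] {u : ℝ → E} {x₀ v : E} {c : ℝ}
    (hu : (fun t => u t - x₀ - (c * t) • v) =O[𝓝[>] 0] fun t => t ^ 2) :
    (fun t => u t - x₀) =O[𝓝[>] 0] fun t => t := by
  have hsq : (fun t : ℝ => t ^ 2) =O[𝓝[>] 0] fun t => t :=
    (isLittleO_pow_id one_lt_two).isBigO.mono nhdsWithin_le_nhds
  have hlin : (fun t : ℝ => (c * t) • v) =O[𝓝[>] 0] fun t => t :=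
    ((isBigO_const_mul_self c _ _).smul (isBigO_const_const v (one_ne_zero (α := ℝ)) _)).congr_right
      fun t => by simp
  exact ((hu.trans hsq).add hlin).congr_left fun t => by abel

end NhdsGT

variable {ι : Type*} [Fintype ι]

noncomputable def patankarRate (A B : ι → ι → ℝ) (w u : ι → ℝ) (i : ι) : ℝ :=
  ∑ j, (A i j * u j / w j - B i j * u i / w i)

def netRate (A B : ι → ι → ℝ) (i : ι) : ℝ :=
  ∑ j, (A i j - B i j)

def pdsRate (p d : ι → ι → (ι → ℝ) → ℝ) (z : ι → ℝ) : ι → ℝ :=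
  netRate (fun i j => p i j z) (fun i j => d i j z)

theorem netRate_add_smul_eq_pdsRate (p d : ι → ι → (ι → ℝ) → ℝ) (b₁ b₂ : ℝ) (y z : ι → ℝ) :
    netRate (fun i j => b₁ * p i j y + b₂ * p i j z) (fun i j => b₁ * d i j y + b₂ * d i j z) =
      b₁ • pdsRate p d y + b₂ • pdsRate p d z := by
  ext i
  simp only [pdsRate, netRate, Pi.add_apply, Pi.smul_apply, smul_eq_mul, Finset.mul_sum,
    ← Finset.sum_add_distrib]
  exact Finset.sum_congr rfl fun j _ => by ring

theorem sum_patankarRate_eq_zero {A B : ι → ι → ℝ} (hAB : ∀ i j, A i j = B j i) (w u : ι → ℝ) :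
    ∑ i, patankarRate A B w u i = 0 := by
  simp only [patankarRate, Finset.sum_sub_distrib, hAB]
  rw [Finset.sum_comm, sub_self]

theorem patankarRate_sub_netRate (A B : ι → ι → ℝ) (w u : ι → ℝ) (i : ι) :
    patankarRate A B w u i - netRate A B i =
      ∑ j, (A i j * (u j / w j - 1) - B i j * (u i / w i - 1)) := by
  simp only [patankarRate, netRate, ← Finset.sum_sub_distrib]
  exact Finset.sum_congr rfl fun j _ => by ring

theorem netRate_sub_netRate (A B A' B' : ι → ι → ℝ) :
    netRate A B - netRate A' B' = netRate (A - A') (B - B') := by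
  ext i
  simp only [netRate, Pi.sub_apply, ← Finset.sum_sub_distrib]
  exact Finset.sum_congr rfl fun j _ => by ring

section PatankarSystem

variable {A B : ι → ι → ℝ} {c w u : ι → ℝ} {τ : ℝ}

theorem sum_eq_of_eq_add_patankarRate (hAB : ∀ i j, A i j = B j i)
    (hu : ∀ i, u i = c i + τ * patankarRate A B w u i) : ∑ i, u i = ∑ i, c i := by
  rw [Finset.sum_congr rfl fun i _ => hu i, Finset.sum_add_distrib, ← Finset.mul_sum,
    sum_patankarRate_eq_zero hAB, mul_zero, add_zero]

theorem pos_of_eq_add_patankarRate (hτ : 0 ≤ τ) (hA : ∀ i j, 0 ≤ A i j) (hB : ∀ i j, 0 ≤ B i j)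
    (hc : ∀ i, 0 < c i) (hw : ∀ i, 0 < w i) (hsmall : ∀ i, τ * ∑ j, A i j < w i)
    (hu : ∀ i, u i = c i + τ * patankarRate A B w u i) (i : ι) : 0 < u i := by
  obtain ⟨k, -, hk⟩ :=
    Finset.exists_min_image Finset.univ (fun j => u j / w j) ⟨i, Finset.mem_univ i⟩
  set x := u k / w k
  -- at a minimiser of `u / w`, every production term is at least `A k j * x`
  have hrate : (∑ j, A k j - ∑ j, B k j) * x ≤ patankarRate A B w u k := by
    rw [sub_mul, Finset.sum_mul, Finset.sum_mul, ← Finset.sum_sub_distrib]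
    refine Finset.sum_le_sum fun j _ => ?_
    rw [mul_div_assoc, mul_div_assoc]
    exact sub_le_sub_right (mul_le_mul_of_nonneg_left (hk j (Finset.mem_univ j)) (hA k j)) _
  -- if `x ≤ 0`, then `c k ≤ (w k - τ ∑ j, A k j) x + τ (∑ j, B k j) x ≤ 0`
  have hx : 0 < x := by
    by_contra! hx
    have huk : u k = w k * x := (mul_div_cancel₀ _ (hw k).ne').symm
    have hBk : 0 ≤ τ * ∑ j, B k j := mul_nonneg hτ (Finset.sum_nonneg fun j _ => hB k j)
    nlinarith [hu k, hc k, hsmall k, mul_le_mul_of_nonneg_left hrate hτ,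
      mul_nonpos_of_nonneg_of_nonpos hBk hx]
  have := mul_pos (hx.trans_le (hk i (Finset.mem_univ i))) (hw i)
  rwa [div_mul_cancel₀ _ (hw i).ne'] at this

end PatankarSystem

section Asymptotics

variable {α : Type*} {l : Filter α}

theorem isBigO_div_sub_one {g u w : α → ℝ} {w₀ : ℝ} (hw : Tendsto w l (𝓝 w₀)) (hw₀ : w₀ ≠ 0)
    (h : (fun x => u x - w x) =O[l] g) : (fun x => u x / w x - 1) =O[l] g := by
  have hinv : (fun x => (w x)⁻¹) =O[l] fun _ => (1 : ℝ) := (hw.inv₀ hw₀).isBigO_one ℝ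
  refine (h.mul hinv).congr' ?_ (by simp)
  filter_upwards [hw.eventually_ne hw₀] with x hx
  field_simp

theorem isBigO_netRate {g : α → ℝ} {A B : α → ι → ι → ℝ} (hA : A =O[l] g) (hB : B =O[l] g) :
    (fun x => netRate (A x) (B x)) =O[l] g :=
  isBigO_pi.2 fun i => .fun_sum fun j _ =>
    (isBigO_pi.1 (isBigO_pi.1 hA i) j).sub (isBigO_pi.1 (isBigO_pi.1 hB i) j)

theorem isBigO_patankar_sub_netRate {τ g : α → ℝ} {A B : α → ι → ι → ℝ} {w u : α → ι → ℝ}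
    {y₀ : ι → ℝ} (hy₀ : ∀ i, y₀ i ≠ 0) (hA : A =O[l] fun _ => (1 : ℝ))
    (hB : B =O[l] fun _ => (1 : ℝ)) (hw : Tendsto w l (𝓝 y₀))
    (hu : ∀ᶠ x in l, ∀ i, u x i = y₀ i + τ x * patankarRate (A x) (B x) (w x) (u x) i)
    (hug : (fun x => u x - w x) =O[l] g) :
    (fun x => u x - y₀ - τ x • netRate (A x) (B x)) =O[l] fun x => τ x * g x := by
  have hq : ∀ j, (fun x => u x j / w x j - 1) =O[l] g := fun j =>
    isBigO_div_sub_one (tendsto_pi_nhds.1 hw j) (hy₀ j) (isBigO_pi.1 hug j)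
  have hmul : ∀ {a b : α → ℝ}, a =O[l] (fun _ => (1 : ℝ)) → b =O[l] g →
      (fun x => a x * b x) =O[l] g := fun ha hb => by simpa only [one_mul] using ha.mul hb
  refine isBigO_pi.2 fun i => ?_
  have hsum : (fun x => ∑ j, (A x i j * (u x j / w x j - 1) - B x i j * (u x i / w x i - 1)))
      =O[l] g := .fun_sum fun j _ =>
    (hmul (isBigO_pi.1 (isBigO_pi.1 hA i) j) (hq j)).sub
      (hmul (isBigO_pi.1 (isBigO_pi.1 hB i) j) (hq i))
  refine ((isBigO_refl τ l).mul hsum).congr' ?_ .rfl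
  filter_upwards [hu] with x hx
  simp only [Pi.sub_apply, Pi.smul_apply, smul_eq_mul]
  rw [← patankarRate_sub_netRate, hx i]
  ring

theorem eventually_patankar_pos_le_sum {τ : α → ℝ} {A B : α → ι → ι → ℝ} {w u : α → ι → ℝ}
    {y₀ : ι → ℝ} (hy₀ : ∀ i, 0 < y₀ i) (hτ : ∀ᶠ x in l, 0 ≤ τ x) (hτ0 : Tendsto τ l (𝓝 0))
    (hA : ∀ᶠ x in l, ∀ i j, 0 ≤ A x i j) (hAB : ∀ᶠ x in l, ∀ i j, A x i j = B x j i)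
    (hAb : A =O[l] fun _ => (1 : ℝ)) (hw : Tendsto w l (𝓝 y₀))
    (hu : ∀ᶠ x in l, ∀ i, u x i = y₀ i + τ x * patankarRate (A x) (B x) (w x) (u x) i) :
    ∀ᶠ x in l, ∀ i, 0 < u x i ∧ u x i ≤ ∑ j, y₀ j := by
  have hw2 : ∀ᶠ x in l, ∀ i, y₀ i / 2 < w x i := eventually_all.2 fun i =>
    (tendsto_pi_nhds.1 hw i).eventually (lt_mem_nhds (half_lt_self (hy₀ i)))
  have hsmall : ∀ᶠ x in l, ∀ i, τ x * ∑ j, A x i j < y₀ i / 2 := by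
    refine eventually_all.2 fun i => (Tendsto.eventually ?_ (gt_mem_nhds (half_pos (hy₀ i))))
    have hrow : (fun x => ∑ j, A x i j) =O[l] fun _ => (1 : ℝ) :=
      .fun_sum fun j _ => isBigO_pi.1 (isBigO_pi.1 hAb i) j
    exact ((isBigO_refl τ l).mul hrow).trans_tendsto (by simpa using hτ0)
  filter_upwards [hτ, hA, hAB, hw2, hsmall, hu] with x hτx hAx hABx hwx hsx hux
  have hpos := pos_of_eq_add_patankarRate hτx hAx (fun i j => hABx j i ▸ hAx j i) hy₀
    (fun i => (half_pos (hy₀ i)).trans (hwx i)) (fun i => (hsx i).trans (hwx i)) hux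
  refine fun i => ⟨hpos i, ?_⟩
  rw [← sum_eq_of_eq_add_patankarRate hABx hux]
  exact Finset.single_le_sum (fun j _ => (hpos j).le) (Finset.mem_univ i)

theorem isBigO_patankar_sub {τ : α → ℝ} {A B : α → ι → ι → ℝ} {w u : α → ι → ℝ}
    {y₀ : ι → ℝ} (hy₀ : ∀ i, 0 < y₀ i) (hτ : ∀ᶠ x in l, 0 ≤ τ x) (hτ0 : Tendsto τ l (𝓝 0))
    (hA : ∀ᶠ x in l, ∀ i j, 0 ≤ A x i j) (hAB : ∀ᶠ x in l, ∀ i j, A x i j = B x j i)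
    (hAb : A =O[l] fun _ => (1 : ℝ)) (hw : Tendsto w l (𝓝 y₀))
    (hu : ∀ᶠ x in l, ∀ i, u x i = y₀ i + τ x * patankarRate (A x) (B x) (w x) (u x) i) :
    (fun x => u x - y₀) =O[l] τ := by
  have hBb : B =O[l] fun _ => (1 : ℝ) := isBigO_pi.2 fun i => isBigO_pi.2 fun j =>
    (isBigO_pi.1 (isBigO_pi.1 hAb j) i).congr' (hAB.mono fun x h => h j i) .rfl
  have hub : u =O[l] fun _ => (1 : ℝ) := by
    refine isBigO_pi.2 fun i => .of_bound (∑ j, y₀ j) ?_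
    filter_upwards [eventually_patankar_pos_le_sum hy₀ hτ hτ0 hA hAB hAb hw hu] with x hx
    rw [norm_one, mul_one, Real.norm_of_nonneg (hx i).1.le]
    exact (hx i).2
  have hstep := isBigO_patankar_sub_netRate (fun i => (hy₀ i).ne') hAb hBb hw hu
    (hub.sub (hw.isBigO_one ℝ))
  have hnet := (isBigO_refl τ l).smul (isBigO_netRate hAb hBb)
  simpa using (hstep.add hnet).congr_right (by simp)

end Asymptotics

section PatankarStep

variable {y₀ : ι → ℝ}

theorem isBigO_patankar_const_sub_netRate {A B : ι → ι → ℝ} {π u : ℝ → ι → ℝ} {a : ℝ}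
    (hy₀ : ∀ i, 0 < y₀ i) (ha : 0 ≤ a) (hA : ∀ i j, 0 ≤ A i j) (hAB : ∀ i j, A i j = B j i)
    (hπ : (fun t => π t - y₀) =O[𝓝[>] 0] fun t => t)
    (hu : ∀ᶠ t in 𝓝[>] 0, ∀ i, u t i = y₀ i + a * t * patankarRate A B (π t) (u t) i) :
    (fun t => u t - y₀ - (a * t) • netRate A B) =O[𝓝[>] 0] fun t => t ^ 2 := by
  have hconst : ∀ M : ι → ι → ℝ, (fun _ : ℝ => M) =O[𝓝[>] 0] fun _ => (1 : ℝ) := fun M =>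
    isBigO_const_const M one_ne_zero _
  have hτ : Tendsto (fun t : ℝ => a * t) (𝓝[>] 0) (𝓝 0) := by
    simpa using ((continuous_const_mul a).tendsto 0).mono_left nhdsWithin_le_nhds
  have hu1 : (fun t => u t - y₀) =O[𝓝[>] 0] fun t => t :=
    (isBigO_patankar_sub hy₀ (eventually_mem_nhdsWithin.mono fun t ht => mul_nonneg ha ht.le)
      hτ (.of_forall fun _ => hA) (.of_forall fun _ => hAB) (hconst A) (tendsto_of_isBigO_sub hπ)
      hu).trans (isBigO_const_mul_self a _ _)
  refine (isBigO_patankar_sub_netRate (fun i => (hy₀ i).ne') (hconst A) (hconst B)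
    (tendsto_of_isBigO_sub hπ) hu ((hu1.sub hπ).congr_left fun t => by abel)).trans ?_
  exact (isBigO_const_mul_self a _ _).congr_left fun t => by ring

theorem isBigO_patankar_sub_netRate_pow_three {A B : ℝ → ι → ι → ℝ} {A₀ B₀ : ι → ι → ℝ}
    {σ u : ℝ → ι → ℝ} (hy₀ : ∀ i, 0 < y₀ i) (hA : ∀ᶠ t in 𝓝[>] 0, ∀ i j, 0 ≤ A t i j)
    (hAB : ∀ᶠ t in 𝓝[>] 0, ∀ i j, A t i j = B t j i)
    (hA₀ : (fun t => A t - A₀) =O[𝓝[>] 0] fun t => t)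
    (hB₀ : (fun t => B t - B₀) =O[𝓝[>] 0] fun t => t)
    (hσ : (fun t => σ t - y₀ - t • netRate A₀ B₀) =O[𝓝[>] 0] fun t => t ^ 2)
    (hu : ∀ᶠ t in 𝓝[>] 0, ∀ i, u t i = y₀ i + t * patankarRate (A t) (B t) (σ t) (u t) i) :
    (fun t => u t - y₀ - t • netRate (A t) (B t)) =O[𝓝[>] 0] fun t => t ^ 3 := by
  have hid : Tendsto (fun t : ℝ => t) (𝓝[>] 0) (𝓝 0) :=
    tendsto_nhdsWithin_of_tendsto_nhds tendsto_id
  have hσ1 : (fun t => σ t - y₀) =O[𝓝[>] 0] fun t => t :=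
    isBigO_sub_of_isBigO_sub_smul (c := 1) (by simpa using hσ)
  have hσlim := tendsto_of_isBigO_sub hσ1
  have hAb := (tendsto_of_isBigO_sub hA₀).isBigO_one ℝ
  have hBb := (tendsto_of_isBigO_sub hB₀).isBigO_one ℝ
  have hu1 : (fun t => u t - y₀) =O[𝓝[>] 0] fun t => t :=
    isBigO_patankar_sub hy₀ (eventually_mem_nhdsWithin.mono fun t ht => le_of_lt ht) hid hA hAB
      hAb hσlim hu
  have hnet : (fun t => t • (netRate (A t) (B t) - netRate A₀ B₀)) =O[𝓝[>] 0]
      fun t => t * t := by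
    simp only [netRate_sub_netRate]
    exact (isBigO_refl (fun t : ℝ => t) _).smul (isBigO_netRate hA₀ hB₀)
  -- bootstrap: `u - σ = O(t)` gives `u - σ = O(t²)`, which gives the claim
  have hu2 : (fun t => u t - y₀ - t • netRate A₀ B₀) =O[𝓝[>] 0] fun t => t ^ 2 := by
    have := isBigO_patankar_sub_netRate (fun i => (hy₀ i).ne') hAb hBb hσlim hu
      ((hu1.sub hσ1).congr_left fun t => by abel)
    exact (this.add hnet).congr (fun t => by rw [smul_sub]; abel) fun t => by ring
  exact (isBigO_patankar_sub_netRate (fun i => (hy₀ i).ne') hAb hBb hσlim hu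
    ((hu2.sub hσ).congr_left fun t => by abel)).congr_right fun t => by ring

end PatankarStep

section Calculus

variable {E G : Type*} [NormedAddCommGroup E] [NormedSpace ℝ E] [NormedAddCommGroup G]
  [NormedSpace ℝ G]

theorem ContDiffAt.isBigO_sub_sub_fderiv {f : E → G} {x₀ : E} (hf : ContDiffAt ℝ 2 f x₀) :
    (fun x => f x - f x₀ - fderiv ℝ f x₀ (x - x₀)) =O[𝓝 x₀] fun x => ‖x - x₀‖ ^ 2 := by
  have hD : (fun x => fderiv ℝ f x - fderiv ℝ f x₀) =O[𝓝 x₀] fun x => x - x₀ :=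
    ((hf.fderiv_right (m := 1) (by norm_num)).differentiableAt one_ne_zero).isBigO_sub
  obtain ⟨C, hC0, hC⟩ := hD.exists_nonneg
  obtain ⟨ε, hε, hball⟩ := Metric.eventually_nhds_iff_ball.1
    (hC.bound.and ((hf.eventually (by simp)).mono fun x hx => hx.differentiableAt two_ne_zero))
  refine .of_bound C ?_
  filter_upwards [Metric.ball_mem_nhds x₀ hε] with x hx
  have hsub : Metric.closedBall x₀ ‖x - x₀‖ ⊆ Metric.ball x₀ ε :=
    Metric.closedBall_subset_ball (by rwa [← dist_eq_norm])
  -- mean value inequality on the ball of radius `‖x - x₀‖`, where `‖Df - Df(x₀)‖ ≤ C ‖x - x₀‖`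
  have hmvt :=
    (convex_closedBall x₀ ‖x - x₀‖).norm_image_sub_le_of_norm_hasFDerivWithin_le' (y := x)
    (fun z hz => (hball z (hsub hz)).2.hasFDerivAt.hasFDerivWithinAt)
    (fun z hz => (hball z (hsub hz)).1.trans (mul_le_mul_of_nonneg_left
      (by simpa [dist_eq_norm] using hz) hC0))
    (Metric.mem_closedBall_self (norm_nonneg _)) (by simp [dist_eq_norm])
  rw [norm_pow, norm_norm, sq, ← mul_assoc]
  exact hmvt

theorem isBigO_comp_sub_of_differentiableAt {f : E → G} {x₀ : E} {u : ℝ → E}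
    (hf : DifferentiableAt ℝ f x₀) (hu : (fun t => u t - x₀) =O[𝓝[>] 0] fun t => t) :
    (fun t => f (u t) - f x₀) =O[𝓝[>] 0] fun t => t :=
  (hf.isBigO_sub.comp_tendsto (tendsto_of_isBigO_sub hu)).trans hu

theorem isBigO_comp_sub_smul_fderiv {f : E → G} {x₀ v : E} {u : ℝ → E} {c : ℝ}
    (hf : ContDiffAt ℝ 2 f x₀)
    (hu : (fun t => u t - x₀ - (c * t) • v) =O[𝓝[>] 0] fun t => t ^ 2) :
    (fun t => f (u t) - f x₀ - (c * t) • fderiv ℝ f x₀ v) =O[𝓝[>] 0] fun t => t ^ 2 := by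
  have hu1 := isBigO_sub_of_isBigO_sub_smul hu
  have hquad := hf.isBigO_sub_sub_fderiv.comp_tendsto (tendsto_of_isBigO_sub hu1)
  have hlinpart := ((fderiv ℝ f x₀).isBigO_comp _ (𝓝[>] 0)).trans hu
  refine ((hquad.trans (hu1.norm_left.pow 2)).add hlinpart).congr_left fun t => ?_
  simp only [Function.comp_apply, map_sub, map_smul]
  abel

theorem isBigO_sub_pow_succ_of_hasDerivWithinAt {g g' : ℝ → E} {m : ℕ}
    (hg : ∀ᶠ t in 𝓝[≥] 0, HasDerivWithinAt g (g' t) (Ici 0) t)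
    (hg' : g' =O[𝓝[≥] 0] fun t => t ^ m) :
    (fun t => g t - g 0) =O[𝓝[≥] 0] fun t => t ^ (m + 1) := by
  obtain ⟨C, hC0, hC⟩ := hg'.exists_nonneg
  obtain ⟨ε, hε, hsub⟩ := mem_nhdsGE_iff_exists_Ico_subset.1 (hg.and hC.bound)
  refine .of_bound C ?_
  filter_upwards [Ico_mem_nhdsGE hε] with t ht
  have hIcc : Icc 0 t ⊆ Ico 0 ε := Icc_subset_Ico_right ht.2
  have hmvt := (convex_Icc 0 t).norm_image_sub_le_of_norm_hasDerivWithin_le (C := C * t ^ m)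
    (fun s hs => (hsub (hIcc hs)).1.mono Icc_subset_Ici_self)
    (fun s hs => (hsub (hIcc hs)).2.trans (mul_le_mul_of_nonneg_left (by
      rw [norm_pow, Real.norm_of_nonneg hs.1]; exact pow_le_pow_left₀ hs.1 hs.2 m) hC0))
    (left_mem_Icc.2 ht.1) (right_mem_Icc.2 ht.1)
  rw [sub_zero, Real.norm_of_nonneg ht.1] at hmvt
  rw [norm_pow, Real.norm_of_nonneg ht.1, pow_succ, ← mul_assoc]
  exact hmvt

theorem isBigO_sub_taylor_two_nhdsGE {F : E → E} {z : ℝ → E} (hF : ContDiffAt ℝ 2 F (z 0))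
    (hz : ∀ᶠ t in 𝓝[≥] 0, HasDerivWithinAt z (F (z t)) (Ici 0) t) :
    (fun t => z t - z 0 - t • F (z 0) - (t ^ 2 / 2) • fderiv ℝ F (z 0) (F (z 0)))
      =O[𝓝[≥] 0] fun t => t ^ 3 := by
  set a := z 0
  set H : E → E := fun x => fderiv ℝ F x (F x)
  have hzlim : Tendsto z (𝓝[≥] 0) (𝓝 a) := (hz.self_of_nhdsWithin self_mem_Ici).continuousWithinAt
  have hz1 : (fun t => z t - a) =O[𝓝[≥] 0] fun t => t := by
    simpa using isBigO_sub_pow_succ_of_hasDerivWithinAt (m := 0) hz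
      (by simpa using (hF.continuousAt.tendsto.comp hzlim).isBigO_one ℝ)
  -- integrate three times: `z' = F ∘ z` is bounded, `(F ∘ z)' = H ∘ z` and `H ∘ z - H a = O(t)`
  have hFz : ∀ᶠ t in 𝓝[≥] 0, HasDerivWithinAt (fun t => F (z t)) (H (z t)) (Ici 0) t := by
    filter_upwards [hz, hzlim.eventually (hF.eventually (by simp))] with t ht hFt
    exact (hFt.differentiableAt two_ne_zero).hasFDerivAt.comp_hasDerivWithinAt t ht
  have hH : (fun t => H (z t) - H a) =O[𝓝[≥] 0] fun t => t :=
    (((((hF.fderiv_right (m := 1) (by norm_num)).clm_apply (hF.of_le one_le_two)).differentiableAt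
      one_ne_zero).isBigO_sub).comp_tendsto hzlim).trans hz1
  have hq := isBigO_sub_pow_succ_of_hasDerivWithinAt (m := 1)
    (g := fun t => F (z t) - t • H a) (g' := fun t => H (z t) - H a)
    (hFz.mono fun t ht => by
      simpa using ht.fun_sub ((hasDerivAt_id' (x := t)).hasDerivWithinAt.smul_const (H a)))
    (by simpa using hH)
  have hr := isBigO_sub_pow_succ_of_hasDerivWithinAt (m := 2)
    (g := fun t => z t - t • F a - (t ^ 2 / 2) • H a)
    (g' := fun t => F (z t) - t • H a - F a)
    (hz.mono fun t ht => by
      convert (ht.fun_sub ((hasDerivAt_id' (x := t)).hasDerivWithinAt.smul_const (F a))).fun_sub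
        (((hasDerivAt_pow 2 t).hasDerivWithinAt.div_const 2).smul_const (H a)) using 1
      rw [one_smul, show ((2 : ℕ) : ℝ) * t ^ (2 - 1) / 2 = t by norm_num]
      abel)
    (hq.congr_left fun t => by simp; abel)
  exact hr.congr_left fun t => by simp [a, H]; abel

theorem isBigO_sub_taylor_two_of_hasDerivWithinAt {F : E → E} {y : ℝ → E} {a b : ℝ} (hab : a < b)
    (hF : ContDiffAt ℝ 2 F (y a))
    (hy : ∀ t ∈ Icc a b, HasDerivWithinAt y (F (y t)) (Icc a b) t) :
    (fun t => y (a + t) - y a - t • F (y a) - (t ^ 2 / 2) • fderiv ℝ F (y a) (F (y a)))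
      =O[𝓝[>] 0] fun t => t ^ 3 := by
  have hz : ∀ᶠ t in 𝓝[≥] 0, HasDerivWithinAt (fun t => y (a + t)) (F (y (a + t))) (Ici 0) t := by
    filter_upwards [Ico_mem_nhdsGE (sub_pos.2 hab)] with t ht
    have hmaps : MapsTo (a + ·) (Icc 0 (b - a)) (Icc a b) := fun s hs =>
      ⟨by linarith [hs.1], by linarith [hs.2]⟩
    have hshift := (hy (a + t) (hmaps (Ico_subset_Icc_self ht))).scomp t
      ((hasDerivAt_id' (x := t)).const_add a).hasDerivWithinAt hmaps
    simpa [Function.comp_def] using hshift.mono_of_mem_nhdsWithin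
      (inter_mem_nhdsWithin (Ici 0) (Iic_mem_nhds ht.2))
  simpa using (isBigO_sub_taylor_two_nhdsGE (by simpa using hF) hz).mono
    (nhdsWithin_mono 0 Ioi_subset_Ici_self)

end Calculus

theorem contDiffAt_pdsRate {p d : ι → ι → (ι → ℝ) → ℝ} {z : ι → ℝ} {n : WithTop ℕ∞}
    (hp : ∀ i j, ContDiffAt ℝ n (p i j) z) (hd : ∀ i j, ContDiffAt ℝ n (d i j) z) :
    ContDiffAt ℝ n (pdsRate p d) z :=
  contDiffAt_pi.2 fun i => .sum fun j _ => (hp i j).sub (hd i j)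

theorem isBigO_mprk22_sub_taylor {p d : ι → ι → (ι → ℝ) → ℝ} {y₀ : ι → ℝ} {a₂₁ b₁ b₂ : ℝ}
    {π σ Y₂ Y : ℝ → ι → ℝ} (hy₀ : ∀ i, 0 < y₀ i) (ha₂₁ : 0 ≤ a₂₁) (hb₁ : 0 ≤ b₁) (hb₂ : 0 ≤ b₂)
    (hb : b₁ + b₂ = 1) (hab : a₂₁ * b₂ = 1 / 2) (hp : ∀ i j z, 0 ≤ p i j z)
    (hpd : ∀ i j z, p i j z = d j i z) (hpC2 : ∀ i j, ContDiffAt ℝ 2 (p i j) y₀)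
    (hdC2 : ∀ i j, ContDiffAt ℝ 2 (d i j) y₀)
    (hπ : (fun t => π t - y₀) =O[𝓝[>] 0] fun t => t)
    (hσ : (fun t => σ t - y₀ - t • pdsRate p d y₀) =O[𝓝[>] 0] fun t => t ^ 2)
    (hY₂ : ∀ᶠ t in 𝓝[>] 0, ∀ i, Y₂ t i = y₀ i + a₂₁ * t *
      patankarRate (fun i j => p i j y₀) (fun i j => d i j y₀) (π t) (Y₂ t) i)
    (hY : ∀ᶠ t in 𝓝[>] 0, ∀ i, Y t i = y₀ i + t *
      patankarRate (fun i j => b₁ * p i j y₀ + b₂ * p i j (Y₂ t))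
        (fun i j => b₁ * d i j y₀ + b₂ * d i j (Y₂ t)) (σ t) (Y t) i) :
    (fun t => Y t - y₀ - t • pdsRate p d y₀ -
      (t ^ 2 / 2) • fderiv ℝ (pdsRate p d) y₀ (pdsRate p d y₀)) =O[𝓝[>] 0] fun t => t ^ 3 := by
  set F := pdsRate p d
  have hstage₁ : (fun t => Y₂ t - y₀ - (a₂₁ * t) • F y₀) =O[𝓝[>] 0] fun t => t ^ 2 :=
    isBigO_patankar_const_sub_netRate hy₀ ha₂₁ (fun i j => hp i j y₀) (fun i j => hpd i j y₀) hπ hY₂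
  have hFY₂ := isBigO_comp_sub_smul_fderiv (contDiffAt_pdsRate hpC2 hdC2) hstage₁
  have hY₂1 := isBigO_sub_of_isBigO_sub_smul hstage₁
  -- the second-stage coefficients differ from those at `y₀` by `b₂ (p(Y₂) - p(y₀)) = O(t)`
  have hcoeff : ∀ q : ι → ι → (ι → ℝ) → ℝ, (∀ i j, ContDiffAt ℝ 2 (q i j) y₀) →
      (fun t => (fun i j => b₁ * q i j y₀ + b₂ * q i j (Y₂ t)) - fun i j => q i j y₀)
        =O[𝓝[>] 0] fun t => t := fun q hq => by
    have hdiff : DifferentiableAt ℝ (fun z i j => q i j z) y₀ := differentiableAt_pi.2 fun i =>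
      differentiableAt_pi.2 fun j => (hq i j).differentiableAt two_ne_zero
    refine ((isBigO_comp_sub_of_differentiableAt hdiff hY₂1).const_smul_left b₂).congr_left
      fun t => ?_
    ext i j
    simp only [Pi.smul_apply, Pi.sub_apply, smul_eq_mul]
    linear_combination (-q i j y₀) * hb
  have hstage₂ := isBigO_patankar_sub_netRate_pow_three hy₀
    (.of_forall fun t i j => add_nonneg (mul_nonneg hb₁ (hp i j y₀)) (mul_nonneg hb₂ (hp i j _)))
    (.of_forall fun t i j => by simp only [hpd]) (hcoeff p hpC2) (hcoeff d hdC2) hσ hY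
  have hcorr := ((isBigO_refl (fun t : ℝ => t) _).smul (hFY₂.const_smul_left b₂)).congr_right
    fun t => by rw [smul_eq_mul, ← pow_succ']
  refine (hstage₂.add hcorr).congr_left fun t => ?_
  rw [netRate_add_smul_eq_pdsRate, Pi.smul_apply]
  linear_combination (norm := module) (-t) • hb • F y₀ - (t ^ 2) • hab • fderiv ℝ F y₀ (F y₀)

theorem stmt_14_general (N : ℕ)
    (p d : Fin N → Fin N → (Fin N → ℝ) → ℝ)
    (hpnn : ∀ i j z, 0 ≤ p i j z)
    (hpC2 : ∀ i j, ContDiff ℝ 2 (p i j)) (hdC2 : ∀ i j, ContDiff ℝ 2 (d i j))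
    (hcons : ∀ i j z, p i j z = d j i z)
    (P D : Fin N → (Fin N → ℝ) → ℝ)
    (hP : ∀ i z, P i z = ∑ j, p i j z) (hD : ∀ i z, D i z = ∑ j, d i j z)
    (tn T : ℝ) (hT : 0 < T)
    (y : ℝ → Fin N → ℝ)
    (hy : ∀ (i : Fin N), ∀ t ∈ Set.Icc tn (tn + T),
      HasDerivWithinAt (fun s => y s i) (P i (y t) - D i (y t)) (Set.Icc tn (tn + T)) t)
    (yn : Fin N → ℝ) (hyn : y tn = yn) (hynpos : ∀ i, 0 < yn i)
    (a21 b1 b2 : ℝ) (ha21 : 0 ≤ a21) (hb1 : 0 ≤ b1) (hb2 : 0 ≤ b2)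
    (hbsum : b1 + b2 = 1) (hab : a21 * b2 = 1 / 2)
    (piw σ : ℝ → Fin N → ℝ)
    (hpiwO : ∀ i, BigOAtZero (fun Δt => piw Δt i - yn i) 1)
    (hσO : ∀ i, BigOAtZero (fun Δt => σ Δt i - (yn i + Δt * (P i yn - D i yn))) 2)
    (Y2 Y : ℝ → Fin N → ℝ)
    (hY2 : ∀ Δt, 0 < Δt → Δt < T → ∀ i,
      Y2 Δt i = yn i + a21 * Δt * ∑ j,
        (p i j yn * Y2 Δt j / piw Δt j - d i j yn * Y2 Δt i / piw Δt i))
    (hY : ∀ Δt, 0 < Δt → Δt < T → ∀ i,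
      Y Δt i = yn i + Δt * ∑ j,
        ((b1 * p i j yn + b2 * p i j (Y2 Δt)) * Y Δt j / σ Δt j
          - (b1 * d i j yn + b2 * d i j (Y2 Δt)) * Y Δt i / σ Δt i)) :
    ∀ i, BigOAtZero (fun Δt => Y Δt i - y (tn + Δt) i) 3 := by
  have hPD : ∀ z, (fun i => P i z - D i z) = pdsRate p d z := fun z => funext fun i => by
    simp only [hP, hD, pdsRate, netRate, Finset.sum_sub_distrib]
  have hscheme := isBigO_mprk22_sub_taylor hynpos ha21 hb1 hb2 hbsum hab hpnn hcons
    (fun i j => (hpC2 i j).contDiffAt) (fun i j => (hdC2 i j).contDiffAt)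
    (isBigO_pi.2 fun i => by simpa using bigOAtZero_iff_isBigO.1 (hpiwO i))
    (isBigO_pi.2 fun i => (bigOAtZero_iff_isBigO.1 (hσO i)).congr_left fun t => by
      simp only [← hPD, Pi.sub_apply, Pi.smul_apply, smul_eq_mul]; ring)
    (by filter_upwards [Ioo_mem_nhdsGT hT] with t ht using hY2 t ht.1 ht.2)
    (by filter_upwards [Ioo_mem_nhdsGT hT] with t ht using hY t ht.1 ht.2)
  have hexact := isBigO_sub_taylor_two_of_hasDerivWithinAt (lt_add_of_pos_right tn hT)
    (contDiffAt_pdsRate (fun i j => (hpC2 i j).contDiffAt) (fun i j => (hdC2 i j).contDiffAt))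
    fun t ht => hasDerivWithinAt_pi.2 fun i => by rw [← hPD]; exact hy i t ht
  rw [hyn] at hexact
  exact fun i => bigOAtZero_iff_isBigO.2 ((isBigO_pi.1 (hscheme.sub hexact) i).congr_left
    fun t => by simp)

theorem stmt_14 (N : ℕ) (hN : 1 ≤ N)
    (p d : Fin N → Fin N → (Fin N → ℝ) → ℝ)
    (hpnn : ∀ i j z, 0 ≤ p i j z) (hdnn : ∀ i j z, 0 ≤ d i j z)
    (hpC2 : ∀ i j, ContDiff ℝ 2 (p i j)) (hdC2 : ∀ i j, ContDiff ℝ 2 (d i j))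
    (hcons : ∀ i j z, p i j z = d j i z)
    (hpdiag : ∀ i z, p i i z = 0) (hddiag : ∀ i z, d i i z = 0)
    (P D : Fin N → (Fin N → ℝ) → ℝ)
    (hP : ∀ i z, P i z = ∑ j, p i j z) (hD : ∀ i z, D i z = ∑ j, d i j z)
    (tn T : ℝ) (hT : 0 < T)
    (y : ℝ → Fin N → ℝ)
    (hy : ∀ (i : Fin N), ∀ t ∈ Set.Icc tn (tn + T),
      HasDerivWithinAt (fun s => y s i) (P i (y t) - D i (y t)) (Set.Icc tn (tn + T)) t)
    (yn : Fin N → ℝ) (hyn : y tn = yn) (hynpos : ∀ i, 0 < yn i)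
    (a21 b1 b2 : ℝ) (ha21 : 0 ≤ a21) (hb1 : 0 ≤ b1) (hb2 : 0 ≤ b2)
    (hbsum : b1 + b2 = 1) (hab : a21 * b2 = 1 / 2)
    (piw σ : ℝ → Fin N → ℝ)
    (hpiwpos : ∀ Δt, 0 < Δt → Δt < T → ∀ i, 0 < piw Δt i)
    (hσpos : ∀ Δt, 0 < Δt → Δt < T → ∀ i, 0 < σ Δt i)
    (hpiwO : ∀ i, BigOAtZero (fun Δt => piw Δt i - yn i) 1)
    (hσO : ∀ i, BigOAtZero (fun Δt => σ Δt i - (yn i + Δt * (P i yn - D i yn))) 2)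
    (Y2 Y : ℝ → Fin N → ℝ)
    (hY2 : ∀ Δt, 0 < Δt → Δt < T → ∀ i,
      Y2 Δt i = yn i + a21 * Δt * ∑ j,
        (p i j yn * Y2 Δt j / piw Δt j - d i j yn * Y2 Δt i / piw Δt i))
    (hY : ∀ Δt, 0 < Δt → Δt < T → ∀ i,
      Y Δt i = yn i + Δt * ∑ j,
        ((b1 * p i j yn + b2 * p i j (Y2 Δt)) * Y Δt j / σ Δt j
          - (b1 * d i j yn + b2 * d i j (Y2 Δt)) * Y Δt i / σ Δt i)) :
    ∀ i, BigOAtZero (fun Δt => Y Δt i - y (tn + Δt) i) 3 :=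
  stmt_14_general N p d hpnn hpC2 hdC2 hcons P D hP hD tn T hT y hy yn hyn hynpos a21 b1 b2 ha21 hb1
    hb2 hbsum hab piw σ hpiwO hσO Y2 Y hY2 hY
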